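/- Let C be an additive right polycyclic code induced by a binary vector a. Suppose b is a nonzero binary polynomial in C of minimal degree among nonzero binary polynomials in C, and α g_1 + g_2 is a nonbinary element of C with g_1, g_2 binary, g_1 of minimal degree among binary parts of nonbinary elements of C, and g_1 dividing x^n − a(x) in F2[x]. Then b divides ((x^n − a(x))/g_1)·g_2 in F2[x]. -/

import Mathlib

open Polynomial

noncomputable section

abbrev F4 : Type := GaloisField 2 2

def IsBin (z : F4) : Prop := z = 0 ∨ z = 1

def IsBinVec {n : ℕ} (a : Fin n → F4) : Prop := ∀ i, IsBin (a i)

def IsBinPoly (p : Polynomial F4) : Prop := ∀ i, IsBin (p.coeff i)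

def polyOfVec {n : ℕ} (c : Fin n → F4) : Polynomial F4 :=
  ∑ i : Fin n, Polynomial.C (c i) * X ^ (i : ℕ)

def rightShift {n : ℕ} (a c : Fin n → F4) : Fin n → F4 := fun i =>
  (if (i : ℕ) = 0 then 0 else c ⟨(i : ℕ) - 1, lt_of_le_of_lt (Nat.sub_le _ _) i.isLt⟩)
    + c ⟨n - 1, Nat.sub_lt i.pos Nat.one_pos⟩ * a i

def leftShift {n : ℕ} (a c : Fin n → F4) : Fin n → F4 := fun i =>
  (if h : (i : ℕ) + 1 < n then c ⟨(i : ℕ) + 1, h⟩ else 0) + c ⟨0, i.pos⟩ * a i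

def seqShift {n : ℕ} (a c : Fin n → F4) : Fin n → F4 := fun i =>
  if h : (i : ℕ) + 1 < n then c ⟨(i : ℕ) + 1, h⟩ else ∑ j, a j * c j

def IsRightPolycyclic {n : ℕ} (a : Fin n → F4) (C : AddSubgroup (Fin n → F4)) : Prop :=
  ∀ c ∈ C, rightShift a c ∈ C

def IsLeftPolycyclic {n : ℕ} (a : Fin n → F4) (C : AddSubgroup (Fin n → F4)) : Prop :=
  ∀ c ∈ C, leftShift a c ∈ C

def quotMk {n : ℕ} (a : Fin n → F4) :
    Polynomial F4 →+* Polynomial F4 ⧸ Ideal.span {X ^ n - polyOfVec a} :=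
  Ideal.Quotient.mk _

def codeImage {n : ℕ} (a : Fin n → F4) (C : AddSubgroup (Fin n → F4)) :
    Set (Polynomial F4 ⧸ Ideal.span {X ^ n - polyOfVec a}) :=
  (fun c => quotMk a (polyOfVec c)) '' (C : Set (Fin n → F4))

/-! Multiplication by `x` acts on `R_n` as the right polycyclic shift, so the image of `C` is an
`F₂[x]`-submodule of `R_n`. Multiplying `α g₁ + g₂` by the binary `q` kills
`α q g₁ = α (xⁿ - a(x))`, so `q g₂` lies in the code. Its remainder modulo the binary `b` is
again a binary code word, of smaller degree than `b`, hence zero by minimality of `b`. -/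

lemma isBin_iff_mem_range (z : F4) : IsBin z ↔ z ∈ Set.range (algebraMap (ZMod 2) F4) := by
  constructor
  · rintro (rfl | rfl)
    exacts [⟨0, map_zero _⟩, ⟨1, map_one _⟩]
  · rintro ⟨x, rfl⟩
    fin_cases x
    exacts [Or.inl (map_zero _), Or.inr (map_one _)]

lemma isBinPoly_iff_mem_lifts (p : F4[X]) : IsBinPoly p ↔ p ∈ lifts (algebraMap (ZMod 2) F4) := by
  simp only [lifts_iff_coeff_lifts, IsBinPoly, isBin_iff_mem_range]

lemma IsBinPoly.mul {p r : F4[X]} (hp : IsBinPoly p) (hr : IsBinPoly r) : IsBinPoly (p * r) := by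
  rw [isBinPoly_iff_mem_lifts] at *
  exact mul_mem hp hr

lemma IsBinPoly.monic {b : F4[X]} (hb : IsBinPoly b) (hb0 : b ≠ 0) : b.Monic :=
  (hb b.natDegree).resolve_left (leadingCoeff_ne_zero.mpr hb0)

lemma IsBinPoly.divByMonic_and_modByMonic {p d : F4[X]} (hp : IsBinPoly p) (hd : IsBinPoly d)
    (hd0 : d ≠ 0) : IsBinPoly (p /ₘ d) ∧ IsBinPoly (p %ₘ d) := by
  have hdm := IsBinPoly.monic hd hd0
  simp only [isBinPoly_iff_mem_lifts, mem_lifts] at *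
  obtain ⟨d', rfl, -, hd'⟩ := lifts_and_degree_eq_and_monic hd hdm
  obtain ⟨p', rfl⟩ := hp
  exact ⟨⟨p' /ₘ d', map_divByMonic _ hd'⟩, ⟨p' %ₘ d', map_modByMonic _ hd'⟩⟩

lemma coeff_polyOfVec {n : ℕ} (c : Fin n → F4) (k : ℕ) :
    (polyOfVec c).coeff k = if h : k < n then c ⟨k, h⟩ else 0 := by
  simp only [polyOfVec, finsetSum_coeff, coeff_C_mul, coeff_X_pow, mul_ite, mul_one, mul_zero]
  split_ifs with h
  · rw [Finset.sum_eq_single ⟨k, h⟩ (fun j _ hj => if_neg fun hkj => hj (Fin.ext hkj.symm))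
      (by simp)]
    simp
  · exact Finset.sum_eq_zero fun j _ => if_neg fun (hkj : k = j) => h (hkj ▸ j.isLt)

lemma polyOfVec_rightShift {n : ℕ} (hn : 0 < n) (a c : Fin n → F4) :
    polyOfVec (rightShift a c) =
      X * polyOfVec c - C (c ⟨n - 1, Nat.sub_lt hn Nat.one_pos⟩) * (X ^ n - polyOfVec a) := by
  ext k
  rcases k with _ | k
  · simp [coeff_polyOfVec, rightShift, hn, hn.ne]
  · simp only [coeff_sub, coeff_C_mul, coeff_X_mul, coeff_polyOfVec, coeff_X_pow]
    rcases lt_trichotomy (k + 1) n with h | rfl | h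
    · simp [h, (Nat.lt_succ_self k).trans h, h.ne, rightShift]
    · simp
    · simp [h.not_gt, h.ne', show ¬ k < n by omega]

section Code

variable {n : ℕ} (a : Fin n → F4) (C : AddSubgroup (Fin n → F4))

def polyOfVecHom : (Fin n → F4) →+ F4[X] where
  toFun := polyOfVec
  map_zero' := by simp [polyOfVec]
  map_add' c d := by simp [polyOfVec, Finset.sum_add_distrib, add_mul]

/-- Its carrier is definitionally `codeImage a C`. -/
def codeSubgroup : AddSubgroup (F4[X] ⧸ Ideal.span {X ^ n - polyOfVec a}) :=
  C.map ((quotMk a).toAddMonoidHom.comp polyOfVecHom)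

lemma quotMk_modulus : quotMk a (X ^ n - polyOfVec a) = 0 :=
  Ideal.Quotient.eq_zero_iff_mem.mpr (Ideal.mem_span_singleton_self _)

variable {a C}

lemma quotMk_X_mul_mem_codeSubgroup (hC : IsRightPolycyclic a C)
    {y : F4[X] ⧸ Ideal.span {X ^ n - polyOfVec a}} (hy : y ∈ codeSubgroup a C) :
    quotMk a X * y ∈ codeSubgroup a C := by
  rcases Nat.eq_zero_or_pos n with rfl | hn
  · have : Subsingleton (F4[X] ⧸ Ideal.span {X ^ 0 - polyOfVec a}) :=
      Ideal.Quotient.subsingleton_iff.mpr (by simp [polyOfVec])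
    exact Subsingleton.elim 0 (quotMk a X * y) ▸ zero_mem _
  obtain ⟨c, hc, rfl⟩ := hy
  refine ⟨rightShift a c, hC c hc, ?_⟩
  change quotMk a (polyOfVec (rightShift a c)) = quotMk a X * quotMk a (polyOfVec c)
  rw [polyOfVec_rightShift hn, map_sub, map_mul, map_mul, quotMk_modulus, mul_zero, sub_zero]

lemma quotMk_X_pow_mul_mem_codeSubgroup (hC : IsRightPolycyclic a C) (k : ℕ)
    {y : F4[X] ⧸ Ideal.span {X ^ n - polyOfVec a}} (hy : y ∈ codeSubgroup a C) :
    quotMk a X ^ k * y ∈ codeSubgroup a C := by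
  induction k with
  | zero => simpa using hy
  | succ k ih => simpa [pow_succ', mul_assoc] using quotMk_X_mul_mem_codeSubgroup hC ih

lemma quotMk_mul_mem_codeSubgroup (hC : IsRightPolycyclic a C) {p : F4[X]}
    (hp : IsBinPoly p) {y : F4[X] ⧸ Ideal.span {X ^ n - polyOfVec a}}
    (hy : y ∈ codeSubgroup a C) : quotMk a p * y ∈ codeSubgroup a C := by
  rw [p.as_sum_support, map_sum, Finset.sum_mul]
  refine sum_mem fun i _ => ?_
  rcases hp i with h | h
  · simp [h, zero_mem]
  · rw [h, ← X_pow_eq_monomial, map_pow]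
    exact quotMk_X_pow_mul_mem_codeSubgroup hC i hy

/-- The remainder of `u` modulo `b` is a binary code word of degree below `deg b`. -/
lemma exists_isBinPoly_eq_mul_of_minimal_degree (hC : IsRightPolycyclic a C) {b : F4[X]}
    (hbbin : IsBinPoly b) (hb0 : b ≠ 0) (hbdeg : b.degree < n)
    (hbmem : quotMk a b ∈ codeSubgroup a C)
    (hbmin : ∀ p : F4[X], IsBinPoly p → p ≠ 0 → p.degree < n →
      quotMk a p ∈ codeSubgroup a C → b.degree ≤ p.degree)
    {u : F4[X]} (hu : IsBinPoly u) (huC : quotMk a u ∈ codeSubgroup a C) :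
    ∃ r : F4[X], IsBinPoly r ∧ u = b * r := by
  have hbm := IsBinPoly.monic hbbin hb0
  obtain ⟨hdiv, hmod⟩ := IsBinPoly.divByMonic_and_modByMonic hu hbbin hb0
  have hmodC : quotMk a (u %ₘ b) ∈ codeSubgroup a C := by
    rw [modByMonic_eq_sub_mul_div u b, map_sub, map_mul, mul_comm]
    exact sub_mem huC (quotMk_mul_mem_codeSubgroup hC hdiv hbmem)
  have hlt := degree_modByMonic_lt u hbm
  have hmod0 : u %ₘ b = 0 := by
    by_contra h
    exact (hbmin _ hmod h (hlt.trans hbdeg) hmodC).not_gt hlt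
  exact ⟨u /ₘ b, hdiv, by simpa [hmod0] using (modByMonic_add_div u b).symm⟩

end Code

theorem stmt_10_general (n : ℕ) (a : Fin n → F4)
    (C : AddSubgroup (Fin n → F4)) (hC : IsRightPolycyclic a C)
    (α : F4)
    (b : Polynomial F4) (hbbin : IsBinPoly b) (hb0 : b ≠ 0)
    (hbdeg : b.degree < (n : WithBot ℕ)) (hbmem : quotMk a b ∈ codeImage a C)
    (hbmin : ∀ p : Polynomial F4, IsBinPoly p → p ≠ 0 → p.degree < (n : WithBot ℕ) →
      quotMk a p ∈ codeImage a C → b.degree ≤ p.degree)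
    (g1 g2 : Polynomial F4) (hg2bin : IsBinPoly g2)
    (hmem : quotMk a (Polynomial.C α * g1 + g2) ∈ codeImage a C)
    (q : Polynomial F4) (hqbin : IsBinPoly q) (hq : q * g1 = X ^ n - polyOfVec a) :
    ∃ r : Polynomial F4, IsBinPoly r ∧ q * g2 = b * r := by
  have hqg2 : quotMk a (q * g2) = quotMk a q * quotMk a (Polynomial.C α * g1 + g2) := by
    rw [← map_mul, mul_add, mul_left_comm, hq, map_add, map_mul _ (Polynomial.C α),
      quotMk_modulus, mul_zero, zero_add]
  exact exists_isBinPoly_eq_mul_of_minimal_degree hC hbbin hb0 hbdeg hbmem hbmin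
    (IsBinPoly.mul hqbin hg2bin) (hqg2 ▸ quotMk_mul_mem_codeSubgroup hC hqbin hmem)

/-- let `C` be an additive right polycyclic code induced by the
binary vector `a`, `b` a nonzero binary polynomial in `C` of minimal degree
among nonzero binary polynomials in `C`, and `α g1 + g2` a nonbinary element of
`C` with `g1, g2` binary, `g1` of minimal degree among binary parts of
nonbinary elements of `C`, and `g1 ∣ x^n - a(x)` in `F2[x]` (say
`q · g1 = x^n - a(x)` with `q` binary).  Then `b` divides
`((x^n - a(x))/g1) · g2 = q · g2` in `F2[x]`. -/
theorem stmt_10 (n : ℕ) (hn : 0 < n) (a : Fin n → F4) (ha : IsBinVec a)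
    (C : AddSubgroup (Fin n → F4)) (hC : IsRightPolycyclic a C)
    (α : F4) (hα : α ^ 2 + α + 1 = 0)
    (b : Polynomial F4) (hbbin : IsBinPoly b) (hb0 : b ≠ 0)
    (hbdeg : b.degree < (n : WithBot ℕ)) (hbmem : quotMk a b ∈ codeImage a C)
    (hbmin : ∀ p : Polynomial F4, IsBinPoly p → p ≠ 0 → p.degree < (n : WithBot ℕ) →
      quotMk a p ∈ codeImage a C → b.degree ≤ p.degree)
    (g1 g2 : Polynomial F4) (hg1bin : IsBinPoly g1) (hg2bin : IsBinPoly g2)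
    (hg1deg : g1.degree < (n : WithBot ℕ)) (hg2deg : g2.degree < (n : WithBot ℕ))
    (hg1ne : g1 ≠ 0)
    (hmem : quotMk a (Polynomial.C α * g1 + g2) ∈ codeImage a C)
    (hmin : ∀ h1 h2 : Polynomial F4, IsBinPoly h1 → IsBinPoly h2 → h1 ≠ 0 →
      h1.degree < (n : WithBot ℕ) → h2.degree < (n : WithBot ℕ) →
      quotMk a (Polynomial.C α * h1 + h2) ∈ codeImage a C → g1.degree ≤ h1.degree)
    (q : Polynomial F4) (hqbin : IsBinPoly q) (hq : q * g1 = X ^ n - polyOfVec a) :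
    ∃ r : Polynomial F4, IsBinPoly r ∧ q * g2 = b * r :=
  stmt_10_general n a C hC α b hbbin hb0 hbdeg hbmem hbmin g1 g2 hg2bin hmem q hqbin hq
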